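/- arXiv:0711.2638 — 3 statements merged into one kernel-verified Lean document; each statement's English description precedes it below -/
import Mathlib

section
/- Let V be a finite-dimensional real inner product space, G a subgroup of the orthogonal group O(V), and F ∈ GL(V) a linear automorphism such that F · G · F⁻¹ ⊆ O(V). Then the orthogonal part R = F^⊥ of the polar decomposition F = R·U satisfies R · G · R⁻¹ = F · G · F⁻¹. In particular, if F conjugates a subgroup G₁ ⊆ O(V) onto a subgroup G₂ ⊆ O(V), then so does its orthogonal part R. -/
open RealInnerProductSpace

/-- A linear automorphism of a real inner product space is orthogonal if it preserves
the inner product. -/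
def IsOrthogonalEquiv {V : Type*} [NormedAddCommGroup V] [InnerProductSpace ℝ V]
    (g : V ≃ₗ[ℝ] V) : Prop :=
  ∀ v w : V, ⟪g v, g w⟫ = ⟪v, w⟫

/-- A linear endomorphism of a real inner product space is positive-definite
self-adjoint. -/
def IsPosDefSelfAdjoint {V : Type*} [NormedAddCommGroup V] [InnerProductSpace ℝ V]
    (U : V →ₗ[ℝ] V) : Prop :=
  (∀ v w : V, ⟪U v, w⟫ = ⟪v, U w⟫) ∧ (∀ v : V, v ≠ 0 → 0 < ⟪U v, v⟫)

/-- Uniqueness of positive-definite square roots. -/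
lemma posdef_sq_inj {V : Type*} [NormedAddCommGroup V] [InnerProductSpace ℝ V]
    [FiniteDimensional ℝ V] (A B : V →ₗ[ℝ] V)
    (hA : IsPosDefSelfAdjoint A) (hB : IsPosDefSelfAdjoint B)
    (h : A.comp A = B.comp B) : A = B := by
  set C := A - B with hCdef
  have hCsym : C.IsSymmetric := by
    intro v w
    simp only [hCdef, LinearMap.sub_apply, inner_sub_left, inner_sub_right]
    rw [hA.1 v w, hB.1 v w]
  have hcomp : A.comp C + C.comp B = 0 := by
    simp only [hCdef]
    rw [LinearMap.comp_sub, LinearMap.sub_comp]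
    rw [← h]
    abel
  have hker : ∀ μ : ℝ, Module.End.eigenspace C μ ≤ LinearMap.ker C := by
    intro μ v hv
    rw [Module.End.mem_eigenspace_iff] at hv
    rcases eq_or_ne v 0 with rfl | hv0
    · simp
    · have h0 : ⟪A (C v) + C (B v), v⟫ = 0 := by
        have := congrFun (congrArg DFunLike.coe hcomp) v
        simp only [LinearMap.add_apply, LinearMap.comp_apply, LinearMap.zero_apply] at this
        rw [this, inner_zero_left]
      have h1 : ⟪A (C v), v⟫ = μ * ⟪A v, v⟫ := by
        rw [hv, map_smul, real_inner_smul_left]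
      have h2 : ⟪C (B v), v⟫ = μ * ⟪B v, v⟫ := by
        rw [hCsym (B v) v, hv, real_inner_smul_right]
      rw [inner_add_left, h1, h2, ← mul_add] at h0
      have hpos : 0 < ⟪A v, v⟫ + ⟪B v, v⟫ := add_pos (hA.2 v hv0) (hB.2 v hv0)
      have hμ : μ = 0 := by
        rcases mul_eq_zero.mp h0 with h | h
        · exact h
        · exact absurd h (ne_of_gt hpos)
      simp [LinearMap.mem_ker, hv, hμ]
  have htop : (⨆ μ : ℝ, Module.End.eigenspace C μ) = ⊤ := by
    have := hCsym.orthogonalComplement_iSup_eigenspaces_eq_bot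
    rwa [Submodule.orthogonal_eq_bot_iff] at this
  have : LinearMap.ker C = ⊤ := top_unique (htop ▸ iSup_le hker)
  have hC0 : C = 0 := LinearMap.ker_eq_top.mp this
  have := sub_eq_zero.mp (hCdef ▸ hC0)
  exact this

/-- Let `G` be a subgroup of the orthogonal group of `V` and `F` a
linear automorphism with `F·G·F⁻¹ ⊆ O(V)`. If `F = R·U` is the polar decomposition,
then conjugation by the orthogonal part `R` agrees with conjugation by `F` on `G`;
in particular, if `F` conjugates `G` onto an orthogonal subgroup `G₂`, so does `R`. -/
theorem orthPart_conjugates {V : Type*} [NormedAddCommGroup V] [InnerProductSpace ℝ V]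
    [FiniteDimensional ℝ V]
    (G : Subgroup (V ≃ₗ[ℝ] V)) (hG : ∀ g ∈ G, IsOrthogonalEquiv g)
    (F R U : V ≃ₗ[ℝ] V)
    (hR : IsOrthogonalEquiv R)
    (hU : IsPosDefSelfAdjoint (U : V →ₗ[ℝ] V))
    (hFRU : ∀ v : V, F v = R (U v))
    (hconj : ∀ g ∈ G, IsOrthogonalEquiv ((F.symm.trans g).trans F)) :
    ((fun g : V ≃ₗ[ℝ] V => (R.symm.trans g).trans R) '' G
        = (fun g : V ≃ₗ[ℝ] V => (F.symm.trans g).trans F) '' G) ∧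
    (∀ G₂ : Subgroup (V ≃ₗ[ℝ] V), (∀ g ∈ G₂, IsOrthogonalEquiv g) →
      (fun g : V ≃ₗ[ℝ] V => (F.symm.trans g).trans F) '' G = ↑G₂ →
      (fun g : V ≃ₗ[ℝ] V => (R.symm.trans g).trans R) '' G = ↑G₂) := by
  -- key: for g ∈ G, U commutes with g
  have key : ∀ g ∈ G, (R.symm.trans g).trans R = (F.symm.trans g).trans F := by
    intro g hg
    have hgo := hG g hg
    have hco := hconj g hg
    -- ⟪U (g x), U (g y)⟫ = ⟪U x, U y⟫
    have hUg : ∀ x y : V, ⟪U (g x), U (g y)⟫ = ⟪U x, U y⟫ := by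
      intro x y
      have := hco (F x) (F y)
      simp only [LinearEquiv.trans_apply, LinearEquiv.symm_apply_apply] at this
      rw [hFRU (g x), hFRU (g y), hR] at this
      rw [this, hFRU x, hFRU y, hR]
    -- B = g⁻¹ ∘ U ∘ g
    set B : V →ₗ[ℝ] V := (g.symm : V →ₗ[ℝ] V) ∘ₗ (U : V →ₗ[ℝ] V) ∘ₗ (g : V →ₗ[ℝ] V) with hBdef
    have hUsym : ∀ a b : V, ⟪U a, b⟫ = ⟪a, U b⟫ := fun a b => hU.1 a b
    have hgsym : ∀ a b : V, ⟪g.symm a, g.symm b⟫ = ⟪a, b⟫ := by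
      intro a b
      have := hgo (g.symm a) (g.symm b)
      simp only [LinearEquiv.apply_symm_apply] at this
      rw [this]
    have hBpd : IsPosDefSelfAdjoint B := by
      constructor
      · intro v w
        simp only [hBdef, LinearMap.comp_apply, LinearEquiv.coe_coe]
        rw [show (⟪g.symm (U (g v)), w⟫ : ℝ) = ⟪U (g v), g w⟫ by
          rw [← hgsym (U (g v)) (g w), LinearEquiv.symm_apply_apply]]
        rw [hUsym (g v) (g w)]
        rw [← hgsym (g v) (U (g w)), LinearEquiv.symm_apply_apply]
      · intro v hv
        simp only [hBdef, LinearMap.comp_apply, LinearEquiv.coe_coe]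
        rw [show (⟪g.symm (U (g v)), v⟫ : ℝ) = ⟪U (g v), g v⟫ by
          rw [← hgsym (U (g v)) (g v), LinearEquiv.symm_apply_apply]]
        exact hU.2 (g v) (by simp [hv])
    have hBsq : B.comp B = (U : V →ₗ[ℝ] V).comp (U : V →ₗ[ℝ] V) := by
      apply LinearMap.ext
      intro x
      apply ext_inner_right ℝ
      intro y
      simp only [hBdef, LinearMap.comp_apply, LinearEquiv.coe_coe,
        LinearEquiv.symm_apply_apply, LinearEquiv.apply_symm_apply]
      rw [show (⟪g.symm (U (U (g x))), y⟫ : ℝ) = ⟪U (U (g x)), g y⟫ by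
        rw [← hgsym (U (U (g x))) (g y), LinearEquiv.symm_apply_apply]]
      rw [hUsym (U (g x)) (g y), hUg x y, ← hUsym (U x) y]
    have hBU : B = (U : V →ₗ[ℝ] V) := posdef_sq_inj B U hBpd hU hBsq
    -- so U (g v) = g (U v)
    have hcomm : ∀ v : V, U (g v) = g (U v) := by
      intro v
      have := congrFun (congrArg DFunLike.coe hBU) v
      simp only [hBdef, LinearMap.comp_apply, LinearEquiv.coe_coe] at this
      have := congrArg g this
      rwa [LinearEquiv.apply_symm_apply] at this
    apply LinearEquiv.ext
    intro x
    simp only [LinearEquiv.trans_apply]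
    have hx : x = R (U (F.symm x)) := by rw [← hFRU, LinearEquiv.apply_symm_apply]
    have hRsx : R.symm x = U (F.symm x) := by
      conv_lhs => rw [hx]
      rw [LinearEquiv.symm_apply_apply]
    rw [hRsx, hFRU (g (F.symm x)), hcomm (F.symm x)]
  have h1 : (fun g : V ≃ₗ[ℝ] V => (R.symm.trans g).trans R) '' G
      = (fun g : V ≃ₗ[ℝ] V => (F.symm.trans g).trans F) '' G :=
    Set.image_congr key
  exact ⟨h1, fun G₂ _ h2 => h1.trans h2⟩
end

section
/- Let (M, g) be a Riemannian manifold and let Ω be a subgroupoid of the frame groupoid Π(M) such that for every x ∈ M the vertex group Ω_{x,x} is contained in the orthogonal group O(T_xM). Then the orthogonal reduction of the normalizoid of Ω equals the intersection of the normalizoid with the orthogonal groupoid: N̄(Ω) = N(Ω) ∩ O(M), where N̄(Ω) = {F^⊥ : F ∈ N(Ω)}. -/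
open RealInnerProductSpace

/-- A subgroupoid of the frame groupoid of a family of (tangent) spaces `T x`, `x ∈ M`:
a family of sets of linear isomorphisms `T x ≃ T y` containing the identities and closed
under composition and inverses. -/
structure FrameSubgroupoid {M : Type*} (T : M → Type*)
    [∀ x, NormedAddCommGroup (T x)] [∀ x, InnerProductSpace ℝ (T x)] where
  arrows : ∀ x y : M, Set (T x ≃ₗ[ℝ] T y)
  id_mem : ∀ x, LinearEquiv.refl ℝ (T x) ∈ arrows x x
  comp_mem : ∀ {x y z : M} {f : T x ≃ₗ[ℝ] T y} {g : T y ≃ₗ[ℝ] T z},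
    f ∈ arrows x y → g ∈ arrows y z → f.trans g ∈ arrows x z
  inv_mem : ∀ {x y : M} {f : T x ≃ₗ[ℝ] T y}, f ∈ arrows x y → f.symm ∈ arrows y x

/-- A linear isomorphism between inner product spaces is orthogonal if it preserves
the inner product. -/
def IsOrthogonalFrameMap {E F : Type*} [NormedAddCommGroup E] [InnerProductSpace ℝ E]
    [NormedAddCommGroup F] [InnerProductSpace ℝ F] (A : E ≃ₗ[ℝ] F) : Prop :=
  ∀ v w : E, ⟪A v, A w⟫ = ⟪v, w⟫

/-- `R` is the orthogonal part of the polar decomposition `A = R ∘ U` of `A`. -/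
def IsOrthPart {E F : Type*} [NormedAddCommGroup E] [InnerProductSpace ℝ E]
    [NormedAddCommGroup F] [InnerProductSpace ℝ F] (R A : E ≃ₗ[ℝ] F) : Prop :=
  IsOrthogonalFrameMap R ∧ ∃ U : E →ₗ[ℝ] E,
    (∀ v w : E, ⟪U v, w⟫ = ⟪v, U w⟫) ∧ (∀ v : E, v ≠ 0 → 0 < ⟪U v, v⟫) ∧
    (A : E →ₗ[ℝ] F) = (R : E →ₗ[ℝ] F) ∘ₗ U

open Module.End in
lemma anticomm_eq_zero {E : Type*} [NormedAddCommGroup E] [InnerProductSpace ℝ E]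
    [FiniteDimensional ℝ E] (U K : E →ₗ[ℝ] E)
    (hsym : ∀ v w : E, ⟪U v, w⟫ = ⟪v, U w⟫) (hpos : ∀ v : E, v ≠ 0 → 0 < ⟪U v, v⟫)
    (hanti : ∀ v, U (K v) = - K (U v)) : K = 0 := by
  have hS : U.IsSymmetric := hsym
  have htop : (⨆ μ : ℝ, eigenspace U μ) = ⊤ := by
    have := hS.orthogonalComplement_iSup_eigenspaces_eq_bot
    rwa [Submodule.orthogonal_eq_bot_iff] at this
  have hker : ∀ μ : ℝ, eigenspace U μ ≤ LinearMap.ker K := by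
    intro μ v hv
    have hUv : U v = μ • v := mem_eigenspace_iff.mp hv
    by_cases hv0 : v = 0
    · simp [hv0]
    have hvv : (0:ℝ) < ⟪v, v⟫ := by
      rw [real_inner_self_eq_norm_sq]; exact pow_pos (norm_pos_iff.mpr hv0) 2
    have hμ : 0 < μ := by
      have h1 : (0:ℝ) < ⟪U v, v⟫ := hpos v hv0
      rw [hUv, real_inner_smul_left] at h1
      nlinarith
    by_contra hKv
    have hKv0 : K v ≠ 0 := fun h => hKv (by simp [LinearMap.mem_ker, h])
    have h2 : U (K v) = (-μ) • K v := by
      rw [hanti, hUv, map_smul, neg_smul]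
    have h3 : (0:ℝ) < ⟪U (K v), K v⟫ := hpos _ hKv0
    rw [h2, real_inner_smul_left] at h3
    have hKK : (0:ℝ) < ⟪K v, K v⟫ := by
      rw [real_inner_self_eq_norm_sq]; exact pow_pos (norm_pos_iff.mpr hKv0) 2
    nlinarith
  have : (⊤ : Submodule ℝ E) ≤ LinearMap.ker K := htop ▸ iSup_le hker
  exact LinearMap.ker_eq_top.mp (top_le_iff.mp this)

/-- If all vertex groups of a frame subgroupoid `Ω` are orthogonal,
then the orthogonal reduction of the normalizoid of `Ω` equals the intersection of the
normalizoid with the orthogonal groupoid: `N̄(Ω) = N(Ω) ∩ O(M)`. -/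
theorem orth_reduction_of_normalizoid {M : Type*} (T : M → Type*)
    [∀ x, NormedAddCommGroup (T x)] [∀ x, InnerProductSpace ℝ (T x)]
    [∀ x, FiniteDimensional ℝ (T x)]
    (Ω : FrameSubgroupoid T)
    (hvert : ∀ x : M, ∀ g ∈ Ω.arrows x x, IsOrthogonalFrameMap g) :
    let N : ∀ x y : M, Set (T x ≃ₗ[ℝ] T y) := fun x y =>
      {A | Ω.arrows y y =
        (fun h : T x ≃ₗ[ℝ] T x => (A.symm.trans h).trans A) '' Ω.arrows x x}
    ∀ x y : M,
      {R : T x ≃ₗ[ℝ] T y | ∃ F ∈ N x y, IsOrthPart R F}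
        = N x y ∩ {A : T x ≃ₗ[ℝ] T y | IsOrthogonalFrameMap A} := by
  intro N x y
  ext R
  constructor
  · rintro ⟨F, hFN, hRorth, U, hUsym, hUpos, hFU⟩
    have hFap : ∀ w, F w = R (U w) := fun w => by
      have := LinearMap.congr_fun hFU w
      simpa using this
    -- U ∘ F.symm = R.symm
    have hUF : ∀ v, U (F.symm v) = R.symm v := by
      intro v
      apply R.injective
      rw [← hFap, F.apply_symm_apply, R.apply_symm_apply]
    -- for each h in the vertex group, U commutes with h
    have hcomm : ∀ h ∈ Ω.arrows x x, ∀ w, U (h w) = h (U w) := by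
      intro h hh
      have hho : IsOrthogonalFrameMap h := hvert x h hh
      -- F h F⁻¹ is in Ω_yy, hence orthogonal
      have hA : (F.symm.trans h).trans F ∈ Ω.arrows y y := by
        rw [hFN]; exact ⟨h, hh, rfl⟩
      have hAo := hvert y _ hA
      -- ⟪U (h a), U (h b)⟫ = ⟪U a, U b⟫
      have hstar : ∀ a b, ⟪U (h a), U (h b)⟫ = ⟪U a, U b⟫ := by
        intro a b
        have := hAo (F a) (F b)
        simp only [LinearEquiv.trans_apply, F.symm_apply_apply] at this
        rw [hFap, hFap, hFap, hFap, hRorth, hRorth] at this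
        exact this
      -- U² commutes with h
      have hU2 : ∀ a, U (U (h a)) = h (U (U a)) := by
        intro a
        apply ext_inner_right ℝ
        intro c
        calc ⟪U (U (h a)), c⟫ = ⟪U (h a), U (h (h.symm c))⟫ := by
              rw [hUsym, h.apply_symm_apply]
          _ = ⟪U a, U (h.symm c)⟫ := hstar a _
          _ = ⟪U (U a), h.symm c⟫ := (hUsym _ _).symm
          _ = ⟪h (U (U a)), c⟫ := by rw [← hho (U (U a)) (h.symm c), h.apply_symm_apply]
      -- hence U commutes with h
      have hK : U ∘ₗ (h : T x →ₗ[ℝ] T x) - (h : T x →ₗ[ℝ] T x) ∘ₗ U = 0 := by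
        apply anticomm_eq_zero U _ hUsym hUpos
        intro v
        simp only [LinearMap.sub_apply, LinearMap.comp_apply, LinearEquiv.coe_coe, map_sub,
          neg_sub]
        rw [hU2 v]
      intro w
      have := LinearMap.congr_fun hK w
      simp only [LinearMap.sub_apply, LinearMap.comp_apply, LinearEquiv.coe_coe,
        LinearMap.zero_apply, sub_eq_zero] at this
      exact this
    refine ⟨?_, hRorth⟩
    -- R ∈ N x y : conjugation by F and by R agree on Ω_xx
    show Ω.arrows y y = _ '' Ω.arrows x x
    rw [hFN]
    apply Set.image_congr
    intro h hh
    ext v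
    simp only [LinearEquiv.trans_apply]
    rw [hFap, hcomm h hh, hUF]
  · rintro ⟨hN, hOrth⟩
    refine ⟨R, hN, hOrth, LinearMap.id, by simp, ?_, by ext v; simp⟩
    intro v hv
    simp only [LinearMap.id_coe, id_eq]
    rw [real_inner_self_eq_norm_sq]
    exact pow_pos (norm_pos_iff.mpr hv) 2
end

section
/- Let G ⊆ GL(3, ℝ) be the group of invertible matrices of block form [[a, b, 0], [c, d, 0], [e, f, g]] (lower block-triangular with a 2×2 block and a 1×1 block) with determinant ±1. Then the normalizer of G in GL(3, ℝ) is the set of all invertible matrices of the same block form (with no determinant restriction), and consequently N(G) ∩ {A ∈ GL(3,ℝ) : |det A| = 1} = G. -/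
open scoped MatrixGroups
open Matrix

lemma inv_block {F : GL (Fin 3) ℝ} (h0 : (F : Matrix (Fin 3) (Fin 3) ℝ) 0 2 = 0)
    (h1 : (F : Matrix (Fin 3) (Fin 3) ℝ) 1 2 = 0) :
    ((F⁻¹ : GL (Fin 3) ℝ) : Matrix (Fin 3) (Fin 3) ℝ) 0 2 = 0 ∧
      ((F⁻¹ : GL (Fin 3) ℝ) : Matrix (Fin 3) (Fin 3) ℝ) 1 2 = 0 := by
  have hcoe : ((F⁻¹ : GL (Fin 3) ℝ) : Matrix (Fin 3) (Fin 3) ℝ)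
      = ((F : Matrix (Fin 3) (Fin 3) ℝ))⁻¹ := Matrix.coe_units_inv F
  rw [hcoe, Matrix.inv_def, Matrix.adjugate_fin_three ((F : Matrix (Fin 3) (Fin 3) ℝ))]
  constructor <;> simp [h0, h1]

/-- conjugation by a block matrix preserves block form and determinant. -/
lemma conj_mem {F g : GL (Fin 3) ℝ} (h0 : (F : Matrix (Fin 3) (Fin 3) ℝ) 0 2 = 0)
    (h1 : (F : Matrix (Fin 3) (Fin 3) ℝ) 1 2 = 0)
    (g0 : (g : Matrix (Fin 3) (Fin 3) ℝ) 0 2 = 0)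
    (g1 : (g : Matrix (Fin 3) (Fin 3) ℝ) 1 2 = 0) :
    ((F * g * F⁻¹ : GL (Fin 3) ℝ) : Matrix (Fin 3) (Fin 3) ℝ) 0 2 = 0 ∧
    ((F * g * F⁻¹ : GL (Fin 3) ℝ) : Matrix (Fin 3) (Fin 3) ℝ) 1 2 = 0 ∧
    ((F * g * F⁻¹ : GL (Fin 3) ℝ) : Matrix (Fin 3) (Fin 3) ℝ).det
      = ((g : Matrix (Fin 3) (Fin 3) ℝ)).det := by
  obtain ⟨i0, i1⟩ := inv_block h0 h1
  rw [Matrix.coe_units_inv] at i0 i1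
  have hd : ((F : Matrix (Fin 3) (Fin 3) ℝ)).det
      * (((F⁻¹ : GL (Fin 3) ℝ) : Matrix (Fin 3) (Fin 3) ℝ)).det = 1 := by
    rw [← Matrix.det_mul, ← Units.val_mul, mul_inv_cancel, Units.val_one, Matrix.det_one]
  rw [Units.val_mul, Units.val_mul]
  refine ⟨?_, ?_, ?_⟩
  · simp [Matrix.mul_apply, Fin.sum_univ_three, h0, h1, g0, g1, i0, i1]
  · simp [Matrix.mul_apply, Fin.sum_univ_three, h0, h1, g0, g1, i0, i1]
  · rw [Matrix.det_mul, Matrix.det_mul]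
    calc ((F:Matrix (Fin 3) (Fin 3) ℝ)).det * ((g:Matrix (Fin 3) (Fin 3) ℝ)).det
          * (((F⁻¹ : GL (Fin 3) ℝ) : Matrix (Fin 3) (Fin 3) ℝ)).det
        = ((g:Matrix (Fin 3) (Fin 3) ℝ)).det * (((F:Matrix (Fin 3) (Fin 3) ℝ)).det
          * (((F⁻¹ : GL (Fin 3) ℝ) : Matrix (Fin 3) (Fin 3) ℝ)).det) := by ring
      _ = _ := by rw [hd, mul_one]

/-- the shear `1 + E 2 j` (j = 0, 1) as a unit -/
def shear (j : Fin 2) : GL (Fin 3) ℝ :=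
  ⟨1 + Matrix.single 2 j.castSucc 1, 1 - Matrix.single 2 j.castSucc 1, by
    fin_cases j <;> · ext i k; fin_cases i <;> fin_cases k <;>
      simp [Matrix.mul_apply, Fin.sum_univ_three, Matrix.single, Matrix.one_apply], by
    fin_cases j <;> · ext i k; fin_cases i <;> fin_cases k <;>
      simp [Matrix.mul_apply, Fin.sum_univ_three, Matrix.single, Matrix.one_apply]⟩

lemma shear_entries (j : Fin 2) :
    ((shear j : GL (Fin 3) ℝ) : Matrix (Fin 3) (Fin 3) ℝ) 0 2 = 0 ∧
    ((shear j : GL (Fin 3) ℝ) : Matrix (Fin 3) (Fin 3) ℝ) 1 2 = 0 ∧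
    ((shear j : GL (Fin 3) ℝ) : Matrix (Fin 3) (Fin 3) ℝ).det = 1 := by
  fin_cases j <;>
    refine ⟨by simp [shear, Matrix.single, Matrix.one_apply],
      by simp [shear, Matrix.single, Matrix.one_apply], ?_⟩ <;>
  · show Matrix.det (1 + Matrix.single 2 _ 1) = 1
    rw [Matrix.det_fin_three]
    simp [Matrix.single, Matrix.one_apply]

/-- Let `G ⊆ GL(3,ℝ)` be the group of invertible matrices of block
form `[[a,b,0],[c,d,0],[e,f,g]]` with determinant `±1` (the symmetry group of a fluid
crystal of the first kind). Then the normalizer of `G` in `GL(3,ℝ)` is the set of all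
invertible matrices of the same block form, and consequently
`N(G) ∩ {|det| = 1} = G`. -/
theorem fluid_crystal_normalizer :
    let G : Set (GL (Fin 3) ℝ) :=
      {A | (A : Matrix (Fin 3) (Fin 3) ℝ) 0 2 = 0 ∧
        (A : Matrix (Fin 3) (Fin 3) ℝ) 1 2 = 0 ∧
        ((A : Matrix (Fin 3) (Fin 3) ℝ).det = 1 ∨ (A : Matrix (Fin 3) (Fin 3) ℝ).det = -1)}
    ({F : GL (Fin 3) ℝ | (fun g => F * g * F⁻¹) '' G = G}
      = {F : GL (Fin 3) ℝ | (F : Matrix (Fin 3) (Fin 3) ℝ) 0 2 = 0 ∧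
          (F : Matrix (Fin 3) (Fin 3) ℝ) 1 2 = 0}) ∧
    ({F : GL (Fin 3) ℝ | (fun g => F * g * F⁻¹) '' G = G}
        ∩ {F : GL (Fin 3) ℝ | |(F : Matrix (Fin 3) (Fin 3) ℝ).det| = 1} = G) := by
  intro G
  have hN : {F : GL (Fin 3) ℝ | (fun g => F * g * F⁻¹) '' G = G}
      = {F : GL (Fin 3) ℝ | (F : Matrix (Fin 3) (Fin 3) ℝ) 0 2 = 0 ∧
          (F : Matrix (Fin 3) (Fin 3) ℝ) 1 2 = 0} := by
    ext F
    simp only [Set.mem_setOf_eq]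
    constructor
    · intro h
      have mem : ∀ j : Fin 2, (F * shear j * F⁻¹) ∈ G := by
        intro j
        obtain ⟨a, b, c⟩ := shear_entries j
        exact h ▸ Set.mem_image_of_mem _ ⟨a, b, Or.inl c⟩
      set Fm := (F : Matrix (Fin 3) (Fin 3) ℝ) with hFm
      set B := ((F⁻¹ : GL (Fin 3) ℝ) : Matrix (Fin 3) (Fin 3) ℝ) with hB
      have hFB : Fm * B = 1 := by
        rw [hFm, hB, ← Units.val_mul, mul_inv_cancel, Units.val_one]
      have hI0 : Fm 0 0 * B 0 2 + Fm 0 1 * B 1 2 + Fm 0 2 * B 2 2 = 0 := by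
        have := congrFun (congrFun hFB 0) 2
        simpa [Matrix.mul_apply, Fin.sum_univ_three, Matrix.one_apply] using this
      have hI1 : Fm 1 0 * B 0 2 + Fm 1 1 * B 1 2 + Fm 1 2 * B 2 2 = 0 := by
        have := congrFun (congrFun hFB 1) 2
        simpa [Matrix.mul_apply, Fin.sum_univ_three, Matrix.one_apply] using this
      have e0 : Fm 0 2 * B 0 2 = 0 ∧ Fm 1 2 * B 0 2 = 0 := by
        obtain ⟨a, b, -⟩ := mem 0
        rw [Units.val_mul, Units.val_mul] at a b
        rw [show ((shear 0 : GL (Fin 3) ℝ) : Matrix (Fin 3) (Fin 3) ℝ)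
          = 1 + Matrix.single 2 0 1 from rfl] at a b
        simp [Matrix.mul_apply, Fin.sum_univ_three, Matrix.single,
          Matrix.one_apply, ← hFm, ← hB] at a b
        exact ⟨by linear_combination a - hI0, by linear_combination b - hI1⟩
      have e1 : Fm 0 2 * B 1 2 = 0 ∧ Fm 1 2 * B 1 2 = 0 := by
        obtain ⟨a, b, -⟩ := mem 1
        rw [Units.val_mul, Units.val_mul] at a b
        rw [show ((shear 1 : GL (Fin 3) ℝ) : Matrix (Fin 3) (Fin 3) ℝ)
          = 1 + Matrix.single 2 1 1 from rfl] at a b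
        simp [Matrix.mul_apply, Fin.sum_univ_three, Matrix.single,
          Matrix.one_apply, ← hFm, ← hB] at a b
        exact ⟨by linear_combination a - hI0, by linear_combination b - hI1⟩
      obtain ⟨e00, e10⟩ := e0
      obtain ⟨e01, e11⟩ := e1
      by_cases hb : B 0 2 = 0 ∧ B 1 2 = 0
      · have := inv_block (F := F⁻¹) hb.1 hb.2
        rwa [inv_inv] at this
      · rcases not_and_or.mp hb with hb' | hb'
        · exact ⟨(mul_eq_zero.mp e00).resolve_right hb',
            (mul_eq_zero.mp e10).resolve_right hb'⟩
        · exact ⟨(mul_eq_zero.mp e01).resolve_right hb',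
            (mul_eq_zero.mp e11).resolve_right hb'⟩
    · rintro ⟨h0, h1⟩
      apply Set.Subset.antisymm
      · rintro _ ⟨g, hg, rfl⟩
        obtain ⟨a, b, c⟩ := conj_mem h0 h1 hg.1 hg.2.1
        exact ⟨a, b, by rw [c]; exact hg.2.2⟩
      · intro g hg
        obtain ⟨j0, j1⟩ := inv_block h0 h1
        refine ⟨F⁻¹ * g * F, ?_, by simp [mul_assoc]⟩
        have hc := conj_mem j0 j1 hg.1 hg.2.1
        rw [inv_inv] at hc
        exact ⟨hc.1, hc.2.1, by rw [hc.2.2]; exact hg.2.2⟩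
  refine ⟨hN, ?_⟩
  rw [hN]
  ext F
  simp only [Set.mem_inter_iff, Set.mem_setOf_eq]
  constructor
  · rintro ⟨⟨h0, h1⟩, hd⟩
    exact ⟨h0, h1, abs_eq (by norm_num : (0:ℝ) ≤ 1) |>.mp hd⟩
  · rintro ⟨h0, h1, hd⟩
    exact ⟨⟨h0, h1⟩, (abs_eq (by norm_num : (0:ℝ) ≤ 1)).mpr hd⟩
end
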